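/- Let G be a connected bidirected graph and let {uα, vβ} be a snarl of G with snarl component X. Then X = G if and only if u and v are tips in G with signs α and β, respectively. -/

import Mathlib

/-!
Bidirected graphs.  A vertex-side is a vertex with a sign (`true` = `+`, `false` = `−`);
a bidirected edge is an unordered pair of vertex-sides (an element of `Sym2 (V × Bool)`).
-/

namespace Paper

variable {V : Type}

/-- A vertex-side: a vertex together with a sign (`true` = `+`, `false` = `−`). -/
abbrev Side (V : Type) := V × Bool

/-- A bidirected graph on the vertex type `V`: a vertex set together with a set of
bidirected edges, each an unordered pair of vertex-sides with endpoints in `verts`. -/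
structure BDGraph (V : Type) where
  verts : Set V
  E : Set (Sym2 (Side V))
  wf : ∀ e ∈ E, ∀ x ∈ e, Prod.fst x ∈ verts

namespace BDGraph

/-- `(u, α)` is a vertex-side of `G`, i.e. some edge of `G` is incident to `u`
with sign `α`. -/
def HasSide (G : BDGraph V) (u : V) (α : Bool) : Prop :=
  ∃ e ∈ G.E, (u, α) ∈ e

/-- Adjacency in the underlying undirected graph `U(G)` (signs ignored). -/
def uadj (G : BDGraph V) (a b : V) : Prop :=
  ∃ e ∈ G.E, ∃ σ τ : Bool, e = s((a, σ), (b, τ))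

/-- Connectivity (reachability) in the underlying undirected graph `U(G)`. -/
def uReach (G : BDGraph V) (a b : V) : Prop :=
  Relation.ReflTransGen G.uadj a b

/-- `v` is a tip of `G`: no two edges of `G` are incident to `v` with different signs. -/
def IsTip (G : BDGraph V) (v : V) : Prop :=
  ∀ e ∈ G.E, ∀ f ∈ G.E, ∀ σ : Bool, (v, σ) ∈ e → (v, !σ) ∈ f → False

/-- `v` is a tip of `G` with sign `α`: every edge of `G` incident to `v` carries the
sign `α` at `v`. -/
def IsTipWith (G : BDGraph V) (v : V) (α : Bool) : Prop :=
  ∀ e ∈ G.E, ∀ σ : Bool, (v, σ) ∈ e → σ = α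

/-- Deletion of the vertex `x` (and all edges incident to it). -/
def deleteVert (G : BDGraph V) (x : V) : BDGraph V where
  verts := G.verts \ {x}
  E := {e | e ∈ G.E ∧ ∀ y : Side V, y ∈ e → y.1 ≠ x}
  wf := by
    rintro e ⟨he, hne⟩ y hy
    exact ⟨G.wf e he y hy, hne y hy⟩

/-- Deletion of a single edge. -/
def deleteEdge (G : BDGraph V) (e₀ : Sym2 (Side V)) : BDGraph V where
  verts := G.verts
  E := G.E \ {e₀}
  wf := by
    rintro e ⟨he, -⟩ y hy
    exact G.wf e he y hy

/-- `x` is a cutvertex of (the underlying undirected graph of) `G`: some two other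
vertices are connected in `G` but no longer connected after deleting `x`. -/
def IsCutvertex (G : BDGraph V) (x : V) : Prop :=
  x ∈ G.verts ∧ ∃ a ∈ G.verts, ∃ b ∈ G.verts, a ≠ x ∧ b ≠ x ∧
    G.uReach a b ∧ ¬ (G.deleteVert x).uReach a b

/-- `G` is connected (underlying undirected graph, nonempty). -/
def Conn (G : BDGraph V) : Prop :=
  G.verts.Nonempty ∧ ∀ a ∈ G.verts, ∀ b ∈ G.verts, G.uReach a b

/-- `H` is a subgraph of `G`. -/
def IsSubgraphOf (H G : BDGraph V) : Prop :=
  H.verts ⊆ G.verts ∧ H.E ⊆ G.E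

end BDGraph

/-! ### Splitting a pair of vertex-sides

Splitting the vertex-side `u α` detaches all edges incident to `u` with the opposite
sign `!α` and reattaches them to a new vertex `u'`.  We split the two vertex-sides
`u α` and `v β` (`u ≠ v`) simultaneously, realising the two new vertices as `Sum.inr u`
and `Sum.inr v` in the vertex type `V ⊕ V` (original vertices are `Sum.inl`). -/

open Classical in
/-- Where each vertex-side goes under the splitting of `u α` and `v β`. -/
noncomputable def splitMap (u : V) (α : Bool) (v : V) (β : Bool) :
    Side V → Side (V ⊕ V) :=
  fun x =>
    if x = (u, !α) then (Sum.inr u, !α)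
    else if x = (v, !β) then (Sum.inr v, !β)
    else (Sum.inl x.1, x.2)

/-- The graph obtained from `G` by splitting the vertex-sides `u α` and `v β`. -/
noncomputable def BDGraph.split2 (G : BDGraph V) (u : V) (α : Bool) (v : V) (β : Bool) :
    BDGraph (V ⊕ V) where
  verts := (Sum.inl '' G.verts) ∪ {Sum.inr u, Sum.inr v}
  E := Sym2.map (splitMap u α v β) '' G.E
  wf := by
    rintro e ⟨f, hf, rfl⟩ x hx
    rw [Sym2.mem_map] at hx
    obtain ⟨y, hy, rfl⟩ := hx
    by_cases h1 : y = (u, !α)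
    · simp only [splitMap, if_pos h1]
      simp
    · by_cases h2 : y = (v, !β)
      · simp only [splitMap, if_neg h1, if_pos h2]
        simp
      · simp only [splitMap, if_neg h1, if_neg h2]
        exact Set.mem_union_left _ ⟨y.1, G.wf f hf y hy, rfl⟩

/-- The pair of vertex-sides `{u α, v β}` is separable in `G`: after splitting `u α`
and `v β`, there is a connected component containing `u` and `v` but neither of the
two new vertices `u'`, `v'`. -/
noncomputable def Separable (G : BDGraph V) (u : V) (α : Bool) (v : V) (β : Bool) : Prop :=
  u ≠ v ∧
    (G.split2 u α v β).uReach (Sum.inl u) (Sum.inl v) ∧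
    ¬ (G.split2 u α v β).uReach (Sum.inl u) (Sum.inr u) ∧
    ¬ (G.split2 u α v β).uReach (Sum.inl u) (Sum.inr v) ∧
    ¬ (G.split2 u α v β).uReach (Sum.inl v) (Sum.inr u) ∧
    ¬ (G.split2 u α v β).uReach (Sum.inl v) (Sum.inr v)

/-- The vertex set of the snarl component of `{u α, v β}`: the vertices of `G` lying in
the connected component of `u` after splitting `u α` and `v β`. -/
noncomputable def SnarlVerts (G : BDGraph V) (u : V) (α : Bool) (v : V) (β : Bool) :
    Set V :=
  {w | (G.split2 u α v β).uReach (Sum.inl u) (Sum.inl w)}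

/-- The edge set of the snarl component of `{u α, v β}`: the edges of `G` lying (after
splitting) in the connected component of `u`. -/
noncomputable def SnarlEdges (G : BDGraph V) (u : V) (α : Bool) (v : V) (β : Bool) :
    Set (Sym2 (Side V)) :=
  {e | e ∈ G.E ∧ ∀ y : Side V, y ∈ e →
      (G.split2 u α v β).uReach (Sum.inl u) (splitMap u α v β y).1}

/-- `{u α, v β}` is a snarl of `G`: separable, and minimal in the sense that the snarl
component `X` contains no vertex `w ∉ {u,v}` with vertex-sides `w γ`, `w !γ` such that
`{u α, w γ}` and `{w !γ, v β}` are both separable in `G`. -/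
noncomputable def IsSnarl (G : BDGraph V) (u : V) (α : Bool) (v : V) (β : Bool) : Prop :=
  Separable G u α v β ∧
    ¬ ∃ w ∈ SnarlVerts G u α v β, w ≠ u ∧ w ≠ v ∧
        ∃ γ : Bool, Separable G u α w γ ∧ Separable G w (!γ) v β

/-! ### Sign-consistent cutvertices and sign-cut graphs -/

/-- A cutvertex `x` of `G` is sign-consistent if `x` is a tip in `G[V(C) ∪ {x}]` for
every connected component `C` of `G − x` (components are described by a member `a`). -/
def BDGraph.SignConsistent (G : BDGraph V) (x : V) : Prop :=
  G.IsCutvertex x ∧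
    ∀ a ∈ (G.deleteVert x).verts,
      ∀ e ∈ G.E, ∀ f ∈ G.E,
        (∀ y : Side V, y ∈ e → y.1 = x ∨ (G.deleteVert x).uReach a y.1) →
        (∀ y : Side V, y ∈ f → y.1 = x ∨ (G.deleteVert x).uReach a y.1) →
        ∀ σ τ : Bool, (x, σ) ∈ e → (x, τ) ∈ f → σ = τ

open Classical in
/-- After splitting every sign-consistent vertex of `G` and relabelling, the two copies
of a sign-consistent vertex `x` are identified with the pairs `(x, true)`, `(x, false)`;
any other vertex `w` is identified with `(w, true)`.  `scKey G` sends a vertex-side to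
the copy of its vertex that it is attached to. -/
noncomputable def scKey (G : BDGraph V) : Side V → Side V :=
  fun x => if G.SignConsistent x.1 then x else (x.1, true)

lemma scKey_fst (G : BDGraph V) (y : Side V) : (scKey G y).1 = y.1 := by
  unfold scKey
  split <;> rfl

lemma scKey_idem (G : BDGraph V) (y : Side V) : scKey G (scKey G y) = scKey G y := by
  by_cases h : G.SignConsistent y.1
  · simp [scKey, h]
  · simp [scKey, h]

/-- The graph obtained from `G` by simultaneously splitting all sign-consistent
vertices (on the vertex type `V × Bool`, cf. `scKey`). -/
noncomputable def BDGraph.splitAll (G : BDGraph V) : BDGraph (Side V) where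
  verts := {p : Side V | p.1 ∈ G.verts ∧ scKey G p = p}
  E := Sym2.map (fun y : Side V => (scKey G y, y.2)) '' G.E
  wf := by
    rintro e ⟨f, hf, rfl⟩ x hx
    rw [Sym2.mem_map] at hx
    obtain ⟨y, hy, rfl⟩ := hx
    show (scKey G y).1 ∈ G.verts ∧ scKey G (scKey G y) = scKey G y
    exact ⟨by rw [scKey_fst]; exact G.wf f hf y hy, scKey_idem G y⟩

/-- `F` is a sign-cut graph of `G`: one of the graphs obtained by splitting every
sign-consistent vertex of `G` and relabelling each new vertex `y'` back to `y`;
concretely, the subgraph of `G` corresponding to a connected component of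
`G.splitAll`. -/
noncomputable def IsSignCutGraph (G F : BDGraph V) : Prop :=
  ∃ p ∈ G.splitAll.verts,
    F.verts = {w : V | ∃ σ : Bool, (w, σ) ∈ G.splitAll.verts ∧
                  G.splitAll.uReach p (w, σ)} ∧
    F.E = {e | e ∈ G.E ∧ ∀ y : Side V, y ∈ e → G.splitAll.uReach p (scKey G y)}

/-! ### Blocks -/

/-- `H` is a block of `G`: a maximal connected subgraph of `G` without a cutvertex. -/
def IsBlock (G H : BDGraph V) : Prop :=
  H.IsSubgraphOf G ∧ H.Conn ∧ (∀ x, ¬ H.IsCutvertex x) ∧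
    ∀ H' : BDGraph V, H'.IsSubgraphOf G → H.IsSubgraphOf H' → H'.Conn →
      (∀ x, ¬ H'.IsCutvertex x) → H'.verts = H.verts ∧ H'.E = H.E

/-- `H'` is a dangling block of `v` with respect to the block `H`:
a block of `G` different from `H` containing `v` with vertex-sides of opposite
signs at `v`. -/
def IsDanglingBlock (G H : BDGraph V) (v : V) (H' : BDGraph V) : Prop :=
  IsBlock G H' ∧ ¬ (H'.verts = H.verts ∧ H'.E = H.E) ∧ v ∈ H'.verts ∧
    H'.HasSide v true ∧ H'.HasSide v false

/-- `{u,v}` is a separation pair of `H`: some two other vertices of `H` are connected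
in `H` but no longer connected after removing `u` and `v`. -/
def IsSepPairB (H : BDGraph V) (u v : V) : Prop :=
  ∃ a ∈ H.verts, ∃ b ∈ H.verts, a ≠ u ∧ a ≠ v ∧ b ≠ u ∧ b ≠ v ∧
    H.uReach a b ∧ ¬ ((H.deleteVert u).deleteVert v).uReach a b

/-- `{u,v}` is a split pair of `H`: a separation pair of `H` or an edge of `H`. -/
def IsSplitPairB (H : BDGraph V) (u v : V) : Prop :=
  IsSepPairB H u v ∨ ∃ e ∈ H.E, ∃ σ τ : Bool, e = s((u, σ), (v, τ))

/-! ### Bidirected walks, paths and cycloids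

A bidirected walk `{v₁ α₁, v₂ α̂₂}, {v₂ α₂, v₃ α̂₃}, …` is encoded by the list
`[(v₁, α₁), (v₂, α₂), …]` of its *departing* sides: the first entry `(v₁, α₁)` is the
side of `v₁` on the first edge, and for `i ≥ 2` the walk arrives at `vᵢ` with sign
`!αᵢ` and departs with sign `αᵢ` (so the sign alternates at every internal vertex). -/

/-- One step of a bidirected walk, between consecutive departing sides. -/
def BStep (G : BDGraph V) (x y : Side V) : Prop :=
  s(x, (y.1, !y.2)) ∈ G.E

/-- `p` encodes a bidirected walk of `G` (at least one edge). -/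
def IsBWalk (G : BDGraph V) (p : List (Side V)) : Prop :=
  2 ≤ p.length ∧ p.Chain' (BStep G)

/-- `p` encodes a `u α`-`v β` bidirected path of `G`: a bidirected walk without
repeated vertices which starts at `u` with sign `α` and arrives at `v` with sign `β`
(so the last departing side recorded is `(v, !β)`). -/
def IsBPath (G : BDGraph V) (p : List (Side V)) (u : V) (α : Bool) (v : V) (β : Bool) :
    Prop :=
  IsBWalk G p ∧ p.head? = some (u, α) ∧ p.getLast? = some (v, !β) ∧
    (p.map Prod.fst).Nodup

/-- `G` has a cycloid: a closed bidirected walk through pairwise distinct vertices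
whose sign alternates at every vertex, except possibly at one (exceptional) vertex,
which we may take to be the starting vertex.  The closing edge either alternates at
the start vertex (`s(y, (x.1, !x.2))`) or fails to alternate there (`s(y, x)`). -/
def HasCycloid (G : BDGraph V) : Prop :=
  ∃ p : List (Side V), p ≠ [] ∧ (p.map Prod.fst).Nodup ∧ p.Chain' (BStep G) ∧
    ∃ x y : Side V, p.head? = some x ∧ p.getLast? = some y ∧
      (s(y, (x.1, !x.2)) ∈ G.E ∨ s(y, x) ∈ G.E)

/-- `G` has a cycloid with an exceptional vertex: exactly one vertex (the starting
one, after rotation) fails sign alternation. -/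
def HasExceptionalCycloid (G : BDGraph V) : Prop :=
  ∃ p : List (Side V), p ≠ [] ∧ (p.map Prod.fst).Nodup ∧ p.Chain' (BStep G) ∧
    ∃ x y : Side V, p.head? = some x ∧ p.getLast? = some y ∧ s(y, x) ∈ G.E

/-! ### Flipping a vertex -/

open Classical in
/-- Flip the sign of every vertex-side of `u`. -/
noncomputable def flipSide (u : V) : Side V → Side V :=
  fun x => if x.1 = u then (x.1, !x.2) else x

/-- The graph obtained from `G` by flipping the vertex `u` (every positive vertex-side
of `u` becomes negative and vice versa). -/
noncomputable def BDGraph.flip (G : BDGraph V) (u : V) : BDGraph V where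
  verts := G.verts
  E := Sym2.map (flipSide u) '' G.E
  wf := by
    rintro e ⟨f, hf, rfl⟩ x hx
    rw [Sym2.mem_map] at hx
    obtain ⟨y, hy, rfl⟩ := hx
    have h1 : (flipSide u y).1 = y.1 := by
      unfold flipSide
      split <;> rfl
    rw [h1]
    exact G.wf f hf y hy

namespace BDGraph

variable {G : BDGraph V}

lemma uadj.mem_verts {a b : V} (h : G.uadj a b) : a ∈ G.verts ∧ b ∈ G.verts := by
  obtain ⟨e, he, σ, τ, rfl⟩ := h
  exact ⟨G.wf _ he (a, σ) (by simp), G.wf _ he (b, τ) (by simp)⟩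

lemma uReach.eq_or_mem_verts {a b : V} (h : G.uReach a b) :
    a = b ∨ (a ∈ G.verts ∧ b ∈ G.verts) := by
  induction h with
  | refl => exact Or.inl rfl
  | tail _ hcb ih =>
    obtain ⟨hc, hb⟩ := hcb.mem_verts
    rcases ih with rfl | ⟨ha, -⟩
    · exact Or.inr ⟨hc, hb⟩
    · exact Or.inr ⟨ha, hb⟩

end BDGraph

section SnarlComponent

variable {G : BDGraph V} {u v : V} {α β : Bool}

lemma splitMap_left : splitMap u α v β (u, !α) = (Sum.inr u, !α) := by
  simp [splitMap]

lemma splitMap_right (hne : u ≠ v) : splitMap u α v β (v, !β) = (Sum.inr v, !β) := by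
  simp [splitMap, Ne.symm hne]

lemma splitMap_of_isTipWith (hu : G.IsTipWith u α) (hv : G.IsTipWith v β)
    {e : Sym2 (Side V)} (he : e ∈ G.E) {y : Side V} (hy : y ∈ e) :
    splitMap u α v β y = (Sum.inl y.1, y.2) := by
  have hyu : y ≠ (u, !α) := by
    rintro rfl
    simpa using hu e he _ hy
  have hyv : y ≠ (v, !β) := by
    rintro rfl
    simpa using hv e he _ hy
  simp [splitMap, hyu, hyv]

lemma uReach_split2_of_isTipWith (hu : G.IsTipWith u α) (hv : G.IsTipWith v β)
    {a b : V} (h : G.uReach a b) :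
    (G.split2 u α v β).uReach (Sum.inl a) (Sum.inl b) := by
  refine Relation.ReflTransGen.lift Sum.inl (fun a b hab => ?_) a b h
  obtain ⟨e, he, σ, τ, rfl⟩ := hab
  refine ⟨Sym2.map (splitMap u α v β) _, ⟨_, he, rfl⟩, σ, τ, ?_⟩
  rw [Sym2.map_mk, splitMap_of_isTipWith hu hv he (by simp),
    splitMap_of_isTipWith hu hv he (by simp)]

lemma mem_verts_of_inl_mem_split2_verts {w : V}
    (h : (Sum.inl w : V ⊕ V) ∈ (G.split2 u α v β).verts) : w ∈ G.verts := by
  rcases h with ⟨x, hx, hxw⟩ | h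
  · cases Sum.inl_injective hxw
    exact hx
  · simp at h

lemma Separable.left_mem_verts (h : Separable G u α v β) : u ∈ G.verts := by
  obtain ⟨hne, hreach, -⟩ := h
  rcases hreach.eq_or_mem_verts with h | ⟨hu, -⟩
  · exact absurd (Sum.inl_injective h) hne
  · exact mem_verts_of_inl_mem_split2_verts hu

lemma snarlVerts_subset (hu : u ∈ G.verts) : SnarlVerts G u α v β ⊆ G.verts := by
  intro w hw
  rcases BDGraph.uReach.eq_or_mem_verts hw with h | ⟨-, hw⟩
  · exact Sum.inl_injective h ▸ hu
  · exact mem_verts_of_inl_mem_split2_verts hw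

lemma snarlEdges_subset : SnarlEdges G u α v β ⊆ G.E := fun _ he => he.1

lemma verts_subset_snarlVerts (hG : G.Conn) (hu : u ∈ G.verts)
    (hut : G.IsTipWith u α) (hvt : G.IsTipWith v β) : G.verts ⊆ SnarlVerts G u α v β :=
  fun w hw => uReach_split2_of_isTipWith hut hvt (hG.2 u hu w hw)

lemma edges_subset_snarlEdges (hG : G.Conn) (hu : u ∈ G.verts)
    (hut : G.IsTipWith u α) (hvt : G.IsTipWith v β) : G.E ⊆ SnarlEdges G u α v β := by
  refine fun e he => ⟨he, fun y hy => ?_⟩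
  rw [splitMap_of_isTipWith hut hvt he hy]
  exact uReach_split2_of_isTipWith hut hvt (hG.2 u hu y.1 (G.wf e he y hy))

lemma isTipWith_of_edges_subset_snarlEdges (hE : G.E ⊆ SnarlEdges G u α v β) {w : V}
    {γ : Bool} (hw : (splitMap u α v β (w, !γ)).1 = Sum.inr w)
    (hr : ¬ (G.split2 u α v β).uReach (Sum.inl u) (Sum.inr w)) : G.IsTipWith w γ := by
  intro e he σ hσ
  by_contra hσγ
  obtain rfl : σ = !γ := by cases σ <;> cases γ <;> simp_all
  exact hr (hw ▸ (hE he).2 _ hσ)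

end SnarlComponent

/-- Let `G` be a connected bidirected graph and `{u α, v β}` a snarl
of `G` with snarl component `X`.  Then `X = G` (both on vertices and on edges) iff
`u` and `v` are tips in `G` with signs `α` and `β` respectively. -/
theorem statement_9 (G : BDGraph V) (hG : G.Conn)
    (u v : V) (α β : Bool) (hs : IsSnarl G u α v β) :
    (SnarlVerts G u α v β = G.verts ∧ SnarlEdges G u α v β = G.E) ↔
      (G.IsTipWith u α ∧ G.IsTipWith v β) := by
  obtain ⟨hsep, -⟩ := hs
  have hu := hsep.left_mem_verts
  obtain ⟨hne, -, hruu, hruv, -⟩ := hsep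
  constructor
  · rintro ⟨-, hE⟩
    exact ⟨isTipWith_of_edges_subset_snarlEdges hE.ge (by rw [splitMap_left]) hruu,
      isTipWith_of_edges_subset_snarlEdges hE.ge (by rw [splitMap_right hne]) hruv⟩
  · rintro ⟨hut, hvt⟩
    exact ⟨(snarlVerts_subset hu).antisymm (verts_subset_snarlVerts hG hu hut hvt),
      snarlEdges_subset.antisymm (edges_subset_snarlEdges hG hu hut hvt)⟩

end Paper
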